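/- Let p be an odd prime and let f: ℤ_p → ℤ_p be compatible. The coordinate functions of f satisfy φ_k(x_0,…,x_k) ≡ x_k + α_k(x_0,…,x_{k−1}) (mod p) for all k = 1,2,… (for some functions α_k with values in {0,…,p−1}) if and only if f can be written as f(x) = φ_0(x_0) + (x − x_0) + p·g(x), where x_0 is the first base-p digit of x and g: ℤ_p → ℤ_p is some compatible function. -/

import Mathlib

open MeasureTheory Function

variable {p : ℕ} [hp : Fact p.Prime]

noncomputable instance : MeasurableSpace ℤ_[p] := borel _
instance : BorelSpace ℤ_[p] := ⟨rfl⟩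

/-- The Haar measure on `ℤ_[p]`, normalized so that `μp p ℤ_[p] = 1`. -/
noncomputable def μp (p : ℕ) [Fact p.Prime] : Measure ℤ_[p] :=
  Measure.addHaarMeasure ⊤

/-- A function `f : ℤ_[p] → ℤ_[p]` is compatible if it is 1-Lipschitz w.r.t. `|·|_p`. -/
def Compatible (f : ℤ_[p] → ℤ_[p]) : Prop :=
  ∀ x y : ℤ_[p], ‖f x - f y‖ ≤ ‖x - y‖

/-- The `k`-th base-`p` digit of `x ∈ ℤ_[p]`, as a natural number in `{0,…,p-1}`. -/
noncomputable def digitN (x : ℤ_[p]) (k : ℕ) : ℕ := x.appr (k + 1) / p ^ k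

/-- The `k`-th base-`p` digit of `x ∈ ℤ_[p]`, as an element of `ZMod p`. -/
noncomputable def digit (x : ℤ_[p]) (k : ℕ) : ZMod p := (digitN x k : ZMod p)

/-- `f` has coordinate representation given by the family `φ`: the `k`-th digit of `f x`
is `φ k xb x_k`, where `xb = x mod p^k ∈ {0,…,p^k−1}` encodes the digits `(x_0,…,x_{k-1})`
and `x_k` is the `k`-th digit of `x`. -/
def CoordRep (f : ℤ_[p] → ℤ_[p]) (φ : ℕ → ℕ → ZMod p → ZMod p) : Prop :=
  ∀ (x : ℤ_[p]) (k : ℕ), digit (f x) k = φ k (x.appr k) (digit x k)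

/-- The reduction of `f` modulo `p^k`, acting on natural-number residues `{0,…,p^k−1}`
(for `k = k'+1` this is the map `f_{k'}` on `ℤ/p^k ℤ`). -/
noncomputable def red (f : ℤ_[p] → ℤ_[p]) (k : ℕ) (m : ℕ) : ℕ := (f (m : ℤ_[p])).appr k

/-- A map of `ZMod n` is transitive (a single-cycle permutation) iff every point can be
reached from every point by iteration. -/
def IsTransitive {n : ℕ} (g : ZMod n → ZMod n) : Prop :=
  ∀ a b : ZMod n, ∃ s : ℕ, g^[s] a = b

/-- A self-map of the residues `{0,…,N−1}` is transitive (single cycle). -/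
def TransitiveOn (g : ℕ → ℕ) (N : ℕ) : Prop :=
  ∀ a, a < N → ∀ b, b < N → ∃ s : ℕ, g^[s] a = b

/-- `compSeq ψ g xb n = ψ (g^[n-1] xb) ∘ ⋯ ∘ ψ (g xb) ∘ ψ xb`. -/
def compSeq (ψ : ℕ → ZMod p → ZMod p) (g : ℕ → ℕ) (xb : ℕ) : ℕ → ZMod p → ZMod p
  | 0 => id
  | n + 1 => ψ (g^[n] xb) ∘ compSeq ψ g xb n

/-- The permutation `F_{k,xb} = φ_{k,f_{k-1}^{(p^k-1)}(xb)} ∘ ⋯ ∘ φ_{k,xb}` of `ZMod p`. -/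
noncomputable def Fperm (φ : ℕ → ℕ → ZMod p → ZMod p) (f : ℤ_[p] → ℤ_[p]) (k xb : ℕ) :
    ZMod p → ZMod p :=
  compSeq (φ k) (red f k) xb (p ^ k)

/-!
Since `φ_0(x_0) = f x mod p`, the function `g` is determined by `f`, and it is compatible exactly
when `p ^ (k + 1) ∣ (f x - f y) - (x - y)` whenever `p ^ k ∣ x - y` with `k ≥ 1`. Both
differences are divisible by `p ^ k` (`f` is compatible), and modulo `p ^ (k + 1)` each is
`p ^ k` times the difference of the `k`-th digits. So the condition says that
`digit (f x) k - digit x k` depends only on `x mod p ^ k`, i.e. that every `φ_k(x̄, ·)` is a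
translation of `ZMod p`.
-/

namespace PadicInt

lemma pow_dvd_iff_norm_le (x : ℤ_[p]) (n : ℕ) :
    (p : ℤ_[p]) ^ n ∣ x ↔ ‖x‖ ≤ (p : ℝ) ^ (-n : ℤ) := by
  rw [norm_le_pow_iff_mem_span_pow, Ideal.mem_span_singleton]

lemma dvd_iff_toZMod_eq_zero (x : ℤ_[p]) : (p : ℤ_[p]) ∣ x ↔ toZMod x = 0 := by
  rw [← RingHom.mem_ker, ker_toZMod, maximalIdeal_eq_span_p, Ideal.mem_span_singleton]

lemma pow_dvd_sub_appr (x : ℤ_[p]) (n : ℕ) : (p : ℤ_[p]) ^ n ∣ x - x.appr n :=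
  Ideal.mem_span_singleton.1 (appr_spec n x)

lemma appr_eq_val_toZModPow (x : ℤ_[p]) (n : ℕ) : x.appr n = (toZModPow n x).val := by
  have : NeZero (p ^ n) := ⟨pow_ne_zero n hp.1.ne_zero⟩
  exact (ZMod.val_natCast_of_lt (x.appr_lt n)).symm

lemma appr_natCast (m n : ℕ) : (m : ℤ_[p]).appr n = m % p ^ n := by
  rw [appr_eq_val_toZModPow, map_natCast, ZMod.val_natCast]

lemma appr_eq_appr_iff {x y : ℤ_[p]} {n : ℕ} :
    x.appr n = y.appr n ↔ (p : ℤ_[p]) ^ n ∣ x - y := by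
  have : NeZero (p ^ n) := ⟨pow_ne_zero n hp.1.ne_zero⟩
  rw [appr_eq_val_toZModPow, appr_eq_val_toZModPow, ZMod.val_injective _ |>.eq_iff,
    ← sub_eq_zero, ← map_sub, ← RingHom.mem_ker, ker_toZModPow, Ideal.mem_span_singleton]

end PadicInt

open PadicInt

lemma compatible_iff_pow_dvd {g : ℤ_[p] → ℤ_[p]} :
    Compatible g ↔ ∀ (n : ℕ) (x y : ℤ_[p]),
      (p : ℤ_[p]) ^ n ∣ x - y → (p : ℤ_[p]) ^ n ∣ g x - g y := by
  simp only [pow_dvd_iff_norm_le]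
  refine ⟨fun hg n x y hxy => (hg x y).trans hxy, fun hg x y => ?_⟩
  rcases eq_or_ne x y with rfl | hxy
  · simp
  have hnorm := norm_eq_zpow_neg_valuation (sub_ne_zero.2 hxy)
  rw [hnorm]
  exact hg _ x y hnorm.le

lemma appr_succ_eq_appr_add_digitN (x : ℤ_[p]) (k : ℕ) :
    x.appr (k + 1) = x.appr k + p ^ k * digitN x k := by
  have hmod : x.appr (k + 1) % p ^ k = x.appr k := by
    have := (Nat.modEq_iff_dvd' (x.appr_mono k.le_succ)).2
      (x.dvd_appr_sub_appr k (k + 1) k.le_succ)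
    rw [← this, Nat.mod_eq_of_lt (x.appr_lt k)]
  rw [digitN, ← hmod, Nat.mod_add_div]

lemma digitN_lt (x : ℤ_[p]) (k : ℕ) : digitN x k < p := by
  rw [digitN, Nat.div_lt_iff_lt_mul (pow_pos hp.1.pos k), ← pow_succ']
  exact x.appr_lt (k + 1)

lemma pow_succ_dvd_sub_appr_sub_digitN (x : ℤ_[p]) (k : ℕ) :
    (p : ℤ_[p]) ^ (k + 1) ∣ x - x.appr k - p ^ k * digitN x k := by
  have h := pow_dvd_sub_appr x (k + 1)
  rwa [appr_succ_eq_appr_add_digitN, Nat.cast_add, Nat.cast_mul, Nat.cast_pow, ← sub_sub] at h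

lemma pow_succ_dvd_pow_mul_iff (n : ℕ) (z : ℤ_[p]) :
    (p : ℤ_[p]) ^ (n + 1) ∣ p ^ n * z ↔ toZMod z = 0 := by
  have hp0 : (p : ℤ_[p]) ≠ 0 := Nat.cast_ne_zero.2 hp.1.ne_zero
  rw [pow_succ, mul_dvd_mul_iff_left (pow_ne_zero n hp0), dvd_iff_toZMod_eq_zero]

lemma pow_succ_dvd_sub_sub_iff {a b x y : ℤ_[p]} {n : ℕ} (hab : (p : ℤ_[p]) ^ n ∣ a - b)
    (hxy : (p : ℤ_[p]) ^ n ∣ x - y) :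
    (p : ℤ_[p]) ^ (n + 1) ∣ a - b - (x - y) ↔ digit a n - digit b n = digit x n - digit y n := by
  rw [← appr_eq_appr_iff] at hab hxy
  have hsplit : a - b - (x - y) =
      (a - a.appr n - p ^ n * digitN a n) - (b - b.appr n - p ^ n * digitN b n)
        - ((x - x.appr n - p ^ n * digitN x n) - (y - y.appr n - p ^ n * digitN y n))
        + p ^ n * ((digitN a n - digitN b n) - (digitN x n - digitN y n)) := by
    rw [hab, hxy]; ring
  rw [hsplit, dvd_add_right (dvd_sub (dvd_sub (pow_succ_dvd_sub_appr_sub_digitN a n)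
    (pow_succ_dvd_sub_appr_sub_digitN b n)) (dvd_sub (pow_succ_dvd_sub_appr_sub_digitN x n)
    (pow_succ_dvd_sub_appr_sub_digitN y n))), pow_succ_dvd_pow_mul_iff, map_sub, sub_eq_zero]
  simp only [map_sub, map_natCast, digit]

lemma exists_appr_eq_digit_eq {k xb : ℕ} (hxb : xb < p ^ k) (e : ZMod p) :
    ∃ x : ℤ_[p], x.appr k = xb ∧ digit x k = e := by
  have hm : xb + e.val * p ^ k < p ^ (k + 1) := by
    calc xb + e.val * p ^ k < (e.val + 1) * p ^ k := by linarith
      _ ≤ p ^ (k + 1) := by rw [pow_succ']; exact Nat.mul_le_mul_right _ e.val_lt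
  have hpk : 0 < p ^ k := pow_pos hp.1.pos k
  refine ⟨(xb + e.val * p ^ k : ℕ), ?_, ?_⟩
  · rw [appr_natCast, Nat.add_mul_mod_self_right, Nat.mod_eq_of_lt hxb]
  · rw [digit, digitN, appr_natCast, Nat.mod_eq_of_lt hm, Nat.add_mul_div_right _ _ hpk,
      Nat.div_eq_of_lt hxb, zero_add, ZMod.natCast_zmod_val]

namespace CoordRep

variable {f : ℤ_[p] → ℤ_[p]} {φ : ℕ → ℕ → ZMod p → ZMod p}

lemma val_zero (hφ : CoordRep f φ) (x : ℤ_[p]) : (φ 0 0 (digit x 0)).val = (f x).appr 1 := by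
  have h := hφ x 0
  rw [show x.appr 0 = 0 from rfl] at h
  rw [← h, digit, ZMod.val_natCast_of_lt (digitN_lt _ 0), digitN, pow_zero, Nat.div_one]

lemma translation_iff (hφ : CoordRep f φ) (k : ℕ) :
    (∀ xb < p ^ k, ∀ d, φ k xb d = d + φ k xb 0) ↔
      ∀ x y : ℤ_[p], x.appr k = y.appr k →
        digit (f x) k - digit x k = digit (f y) k - digit y k := by
  refine ⟨fun h x y hxy => ?_, fun h xb hxb d => ?_⟩
  · rw [hφ x k, hφ y k, h _ (x.appr_lt k) (digit x k), h _ (y.appr_lt k) (digit y k), hxy,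
      add_sub_cancel_left, add_sub_cancel_left]
  · obtain ⟨x, hx, hxd⟩ := exists_appr_eq_digit_eq hxb d
    obtain ⟨y, hy, hyd⟩ := exists_appr_eq_digit_eq hxb 0
    have h' := h x y (hx.trans hy.symm)
    rw [hφ x k, hφ y k, hx, hy, hxd, hyd, sub_zero] at h'
    exact sub_eq_iff_eq_add'.1 h'

end CoordRep

namespace Compatible

variable {f : ℤ_[p] → ℤ_[p]}

lemma pow_dvd_sub (hf : Compatible f) {x y : ℤ_[p]} {n : ℕ} (h : (p : ℤ_[p]) ^ n ∣ x - y) :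
    (p : ℤ_[p]) ^ n ∣ f x - f y :=
  compatible_iff_pow_dvd.1 hf n x y h

lemma digit_translation_iff (hf : Compatible f) (k : ℕ) :
    (∀ x y : ℤ_[p], x.appr k = y.appr k →
        digit (f x) k - digit x k = digit (f y) k - digit y k) ↔
      ∀ x y : ℤ_[p], (p : ℤ_[p]) ^ k ∣ x - y → (p : ℤ_[p]) ^ (k + 1) ∣ f x - f y - (x - y) := by
  simp only [appr_eq_appr_iff]
  refine forall₂_congr fun x y => imp_congr_right fun hxy => ?_
  rw [pow_succ_dvd_sub_sub_iff (hf.pow_dvd_sub hxy) hxy, sub_eq_sub_iff_sub_eq_sub]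

lemma compatible_iff_of_eq (hf : Compatible f) {g : ℤ_[p] → ℤ_[p]}
    (hg : ∀ x, f x = (f x).appr 1 + (x - x.appr 1) + p * g x) :
    Compatible g ↔ ∀ k, 1 ≤ k → ∀ x y : ℤ_[p],
      (p : ℤ_[p]) ^ k ∣ x - y → (p : ℤ_[p]) ^ (k + 1) ∣ f x - f y - (x - y) := by
  have hp0 : (p : ℤ_[p]) ≠ 0 := Nat.cast_ne_zero.2 hp.1.ne_zero
  have hdiff : ∀ k, 1 ≤ k → ∀ x y : ℤ_[p], (p : ℤ_[p]) ^ k ∣ x - y →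
      f x - f y - (x - y) = p * (g x - g y) := by
    intro k hk x y hxy
    have h1 : (p : ℤ_[p]) ^ 1 ∣ x - y := (pow_dvd_pow _ hk).trans hxy
    have hx : ((x.appr 1 : ℕ) : ℤ_[p]) = y.appr 1 := congrArg _ (appr_eq_appr_iff.2 h1)
    have hfx : (((f x).appr 1 : ℕ) : ℤ_[p]) = (f y).appr 1 :=
      congrArg _ (appr_eq_appr_iff.2 (hf.pow_dvd_sub h1))
    linear_combination hg x - hg y + hfx - hx
  rw [compatible_iff_pow_dvd]
  refine ⟨fun h k hk x y hxy => ?_, fun h n x y hxy => ?_⟩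
  · rw [hdiff k hk x y hxy, pow_succ']
    exact mul_dvd_mul_left _ (h k x y hxy)
  · rcases n.eq_zero_or_pos with rfl | hn
    · simp
    have h' := h n hn x y hxy
    rwa [hdiff n hn x y hxy, pow_succ', mul_dvd_mul_iff_left hp0] at h'

lemma exists_compatible_iff (hf : Compatible f) :
    (∃ g : ℤ_[p] → ℤ_[p], Compatible g ∧ ∀ x, f x = (f x).appr 1 + (x - x.appr 1) + p * g x) ↔
      ∀ k, 1 ≤ k → ∀ x y : ℤ_[p],
        (p : ℤ_[p]) ^ k ∣ x - y → (p : ℤ_[p]) ^ (k + 1) ∣ f x - f y - (x - y) := by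
  refine ⟨fun ⟨g, hg, hfg⟩ => (hf.compatible_iff_of_eq hfg).1 hg, fun h => ?_⟩
  have hdvd : ∀ x, (p : ℤ_[p]) ∣ f x - (f x).appr 1 - (x - x.appr 1) := fun x => by
    simpa only [pow_one] using dvd_sub (pow_dvd_sub_appr (f x) 1) (pow_dvd_sub_appr x 1)
  choose g hg using hdvd
  have hfg : ∀ x, f x = (f x).appr 1 + (x - x.appr 1) + p * g x := fun x => by
    linear_combination hg x
  exact ⟨g, (hf.compatible_iff_of_eq hfg).2 h, hfg⟩

end Compatible

theorem coordinate_translation_iff_affine_form_general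
    (f : ℤ_[p] → ℤ_[p]) (φ : ℕ → ℕ → ZMod p → ZMod p)
    (hf : Compatible f) (hφ : CoordRep f φ) :
    (∃ α : ℕ → ℕ → ZMod p,
        ∀ k, 1 ≤ k → ∀ xb, xb < p ^ k → ∀ d : ZMod p, φ k xb d = d + α k xb) ↔
      (∃ g : ℤ_[p] → ℤ_[p], Compatible g ∧
        ∀ x : ℤ_[p],
          f x = ((φ 0 0 (digit x 0)).val : ℤ_[p]) + (x - (x.appr 1 : ℤ_[p])) +
            (p : ℤ_[p]) * g x) := by
  simp only [hφ.val_zero]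
  rw [hf.exists_compatible_iff]
  calc (∃ α : ℕ → ℕ → ZMod p, ∀ k, 1 ≤ k → ∀ xb < p ^ k, ∀ d, φ k xb d = d + α k xb)
      ↔ ∀ k, 1 ≤ k → ∀ xb < p ^ k, ∀ d, φ k xb d = d + φ k xb 0 :=
        ⟨fun ⟨α, h⟩ k hk xb hxb d => by rw [h k hk xb hxb d, h k hk xb hxb 0, zero_add],
          fun h => ⟨fun k xb => φ k xb 0, h⟩⟩
    _ ↔ _ := forall₂_congr fun k _ => (hφ.translation_iff k).trans (hf.digit_translation_iff k)

/-- For odd `p` and compatible `f`, the coordinate functions satisfy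
`φ_k(x̄, x_k) = x_k + α_k(x̄)` for all `k ≥ 1` iff
`f(x) = φ_0(x_0) + (x − x_0) + p·g(x)` for some compatible `g`, where `x_0` is the first
base-`p` digit of `x`. -/
theorem coordinate_translation_iff_affine_form
    (hp2 : p ≠ 2)
    (f : ℤ_[p] → ℤ_[p]) (φ : ℕ → ℕ → ZMod p → ZMod p)
    (hf : Compatible f) (hφ : CoordRep f φ) :
    (∃ α : ℕ → ℕ → ZMod p,
        ∀ k, 1 ≤ k → ∀ xb, xb < p ^ k → ∀ d : ZMod p, φ k xb d = d + α k xb) ↔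
      (∃ g : ℤ_[p] → ℤ_[p], Compatible g ∧
        ∀ x : ℤ_[p],
          f x = ((φ 0 0 (digit x 0)).val : ℤ_[p]) + (x - (x.appr 1 : ℤ_[p])) +
            (p : ℤ_[p]) * g x) :=
  coordinate_translation_iff_affine_form_general f φ hf hφ
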